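/- arXiv:2411.17550 — 9 statements merged into one kernel-verified Lean document; each statement's English description precedes it below -/
import Mathlib

section
/- In the left recollement setting, the exact functor j* : 𝒜 → ℬ induces an equivalence of categories 𝒜/𝒞 ≃ ℬ, where 𝒜/𝒞 is the Serre (Gabriel) quotient of the abelian category 𝒜 by the Serre subcategory 𝒞 = Ker j*. -/
open CategoryTheory Limits Localization

/-- Dual of `Adjunction.isLocalization`: a functor admitting a fully faithful left adjoint
is a localization functor with respect to the class of morphisms it inverts. -/
lemma aux_isLocalization_of_fullyFaithful_leftAdjoint
    {C₁ C₂ : Type*} [Category C₁] [Category C₂]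
    {F : C₂ ⥤ C₁} {G : C₁ ⥤ C₂} (adj : F ⊣ G) [F.Full] [F.Faithful] :
    G.IsLocalization ((MorphismProperty.isomorphisms C₂).inverseImage G) := by
  let W := ((MorphismProperty.isomorphisms C₂).inverseImage G)
  have hG : W.IsInvertedBy G := fun _ _ _ hf => hf
  have hη : IsIso adj.unit := inferInstance
  have : ∀ (X : C₁), IsIso ((Functor.whiskerRight adj.counit W.Q).app X) := fun X =>
    Localization.inverts W.Q W _ (by
      change IsIso (G.map (adj.counit.app X))
      have := congr_app adj.right_triangle X
      dsimp at this
      have h2 : adj.unit.app (G.obj X) ≫ G.map (adj.counit.app X) = 𝟙 _ := by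
        simpa using this
      exact IsIso.of_isIso_fac_left h2)
  have : IsIso (Functor.whiskerRight adj.counit W.Q) := NatIso.isIso_of_isIso_app _
  let e : W.Localization ≌ C₂ :=
    CategoryTheory.Equivalence.mk (Localization.lift G hG W.Q) (F ⋙ W.Q)
    (liftNatIso W.Q W W.Q (G ⋙ F ⋙ W.Q) _ _
      (W.Q.leftUnitor.symm ≪≫ (asIso (Functor.whiskerRight adj.counit W.Q)).symm))
    (Functor.associator _ _ _ ≪≫ Functor.isoWhiskerLeft _ (Localization.fac G hG W.Q) ≪≫
      (asIso adj.unit).symm)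
  apply Functor.IsLocalization.of_equivalence_target W.Q W G e
    (Localization.fac G hG W.Q)

/-- **Left recollement / Serre quotient.**
Let `𝒜`, `ℬ` be abelian categories and `j* : 𝒜 ⥤ ℬ` an exact functor admitting a fully
faithful left adjoint `j_! : ℬ ⥤ 𝒜`.  Let `𝒞 = Ker j*` be the Serre subcategory of objects
killed by `j*`.  Then `j*` induces an equivalence `𝒜/𝒞 ≃ ℬ`, i.e. `j*` is a localization
functor with respect to the class of morphisms whose kernel and cokernel lie in `𝒞`. -/
theorem left_recollement_serre_quotient_equivalence
    {𝒜 : Type*} [Category 𝒜] [Abelian 𝒜]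
    {ℬ : Type*} [Category ℬ] [Abelian ℬ]
    (jstar : 𝒜 ⥤ ℬ) (jbang : ℬ ⥤ 𝒜) (adj : jbang ⊣ jstar)
    [jbang.Full] [jbang.Faithful]
    [PreservesFiniteLimits jstar] [PreservesFiniteColimits jstar] :
    jstar.IsLocalization
      (fun _ _ (f : _ ⟶ _) =>
        IsZero (jstar.obj (kernel f)) ∧ IsZero (jstar.obj (cokernel f))) := by
  have key : (fun X Y (f : X ⟶ Y) =>
        IsZero (jstar.obj (kernel f)) ∧ IsZero (jstar.obj (cokernel f))) =
      ((MorphismProperty.isomorphisms ℬ).inverseImage jstar : MorphismProperty 𝒜) := by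
    funext X Y f
    apply propext
    have ek : jstar.obj (kernel f) ≅ kernel (jstar.map f) := PreservesKernel.iso jstar f
    have ec : jstar.obj (cokernel f) ≅ cokernel (jstar.map f) :=
      PreservesCokernel.iso jstar f
    constructor
    · rintro ⟨h1, h2⟩
      have hk : IsZero (kernel (jstar.map f)) := h1.of_iso ek.symm
      have hc : IsZero (cokernel (jstar.map f)) := h2.of_iso ec.symm
      have : Mono (jstar.map f) := Preadditive.mono_of_isZero_kernel _ hk
      have : Epi (jstar.map f) := Preadditive.epi_of_isZero_cokernel _ hc
      exact isIso_of_mono_of_epi _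
    · intro h
      have : IsIso (jstar.map f) := h
      refine ⟨?_, ?_⟩
      · exact (IsZero.of_iso (isZero_zero ℬ) (kernel.ofMono (jstar.map f))).of_iso ek
      · exact (IsZero.of_iso (isZero_zero ℬ) (cokernel.ofEpi (jstar.map f))).of_iso ec
  rw [key]
  exact aux_isLocalization_of_fullyFaithful_leftAdjoint adj
end

section
/- In the left recollement setting, the inclusion functor i_* : 𝒞 → 𝒜 admits a left adjoint. Explicitly, for X ∈ 𝒜 set i*(X) = coker(ε_X : j_!(j*(X)) → X), where ε is the counit of the adjunction j_! ⊣ j*; then i*(X) lies in 𝒞, and for every object Y of 𝒞 precomposition with the canonical projection X → i*(X) gives a bijection Hom_𝒜(i*(X), Y) ≅ Hom_𝒜(X, Y). -/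
open CategoryTheory Limits

/-- **Left recollement: the inclusion of `𝒞` admits a left adjoint.**
Let `𝒜`, `ℬ` be abelian categories and `j* : 𝒜 ⥤ ℬ` an exact functor admitting a fully
faithful left adjoint `j_! : ℬ ⥤ 𝒜`, and let `𝒞 = Ker j*`.  For `X : 𝒜`, set
`i*(X) = coker(ε_X : j_!(j*(X)) ⟶ X)`.  Then `i*(X)` lies in `𝒞`, and for every `Y ∈ 𝒞`
precomposition with the canonical projection `X ⟶ i*(X)` is a bijection
`Hom(i*(X), Y) ≅ Hom(X, Y)`. -/
theorem left_recollement_inclusion_has_left_adjoint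
    {𝒜 : Type*} [Category 𝒜] [Abelian 𝒜]
    {ℬ : Type*} [Category ℬ] [Abelian ℬ]
    (jstar : 𝒜 ⥤ ℬ) (jbang : ℬ ⥤ 𝒜) (adj : jbang ⊣ jstar)
    [jbang.Full] [jbang.Faithful]
    [PreservesFiniteLimits jstar] [PreservesFiniteColimits jstar]
    (X : 𝒜) :
    IsZero (jstar.obj (cokernel (adj.counit.app X))) ∧
      ∀ (Y : 𝒜), IsZero (jstar.obj Y) →
        Function.Bijective
          (fun g : cokernel (adj.counit.app X) ⟶ Y => cokernel.π (adj.counit.app X) ≫ g) := by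
  constructor
  · have hepi : IsSplitEpi (jstar.map (adj.counit.app X)) :=
      ⟨⟨⟨adj.unit.app (jstar.obj X), adj.right_triangle_components X⟩⟩⟩
    have : Epi (jstar.map (adj.counit.app X)) := hepi.epi
    refine IsZero.of_iso ?_ (PreservesCokernel.iso jstar (adj.counit.app X))
    exact IsZero.of_iso (isZero_zero _) (cokernel.ofEpi _)
  · intro Y hY
    constructor
    · intro g₁ g₂ h
      simp only at h
      exact (cancel_epi (cokernel.π (adj.counit.app X))).mp h
    · intro f
      have w : adj.counit.app X ≫ f = 0 := by
        have h1 : adj.homEquiv _ _ (adj.counit.app X ≫ f)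
            = adj.homEquiv _ _ (0 : jbang.obj (jstar.obj X) ⟶ Y) :=
          hY.eq_of_tgt _ _
        simpa using (adj.homEquiv _ _).injective h1
      exact ⟨cokernel.desc _ f w, cokernel.π_desc _ _ _⟩
end

section
/- In the left recollement setting, an object X of 𝒜 lies in the essential image of j_! (i.e., X ≅ j_!(Z) for some object Z of ℬ) if and only if Hom_𝒜(X, Y) = 0 and Ext¹_𝒜(X, Y) = 0 for every object Y of 𝒞. -/
open CategoryTheory Limits

/-- **Left recollement: characterization of the essential image of `j_!`.**
Let `𝒜`, `ℬ` be abelian categories and `j* : 𝒜 ⥤ ℬ` an exact functor admitting a fully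
faithful left adjoint `j_! : ℬ ⥤ 𝒜`, and let `𝒞 = Ker j*`.  An object `X` of `𝒜` lies in
the essential image of `j_!` if and only if for every `Y ∈ 𝒞` one has `Hom(X, Y) = 0` and
`Ext¹(X, Y) = 0` (the latter meaning that every short exact sequence
`0 ⟶ Y ⟶ X' ⟶ X ⟶ 0` splits). -/
theorem left_recollement_essImage_iff_hom_ext_vanish
    {𝒜 : Type*} [Category 𝒜] [Abelian 𝒜]
    {ℬ : Type*} [Category ℬ] [Abelian ℬ]
    (jstar : 𝒜 ⥤ ℬ) (jbang : ℬ ⥤ 𝒜) (adj : jbang ⊣ jstar)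
    [jbang.Full] [jbang.Faithful]
    [PreservesFiniteLimits jstar] [PreservesFiniteColimits jstar]
    (X : 𝒜) :
    (∃ Z : ℬ, Nonempty (jbang.obj Z ≅ X)) ↔
      ∀ (Y : 𝒜), IsZero (jstar.obj Y) →
        (∀ f : X ⟶ Y, f = 0) ∧
        (∀ (X' : 𝒜) (f : Y ⟶ X') (g : X' ⟶ X) (w : f ≫ g = 0),
          (ShortComplex.mk f g w).ShortExact → ∃ s : X ⟶ X', s ≫ g = 𝟙 X) := by
  have : jstar.IsRightAdjoint := ⟨jbang, ⟨adj⟩⟩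
  constructor
  · rintro ⟨Z, ⟨e⟩⟩ Y hY
    constructor
    · intro f
      have h1 : adj.homEquiv Z Y (e.hom ≫ f) = adj.homEquiv Z Y (e.hom ≫ 0) :=
        hY.eq_of_tgt _ _
      have h2 : e.hom ≫ f = e.hom ≫ 0 := (adj.homEquiv Z Y).injective h1
      rw [comp_zero] at h2
      calc f = e.inv ≫ (e.hom ≫ f) := by rw [Iso.inv_hom_id_assoc]
        _ = 0 := by rw [h2, comp_zero]
    · intro X' f g w hse
      -- `jstar.map g` is an isomorphism
      have hmap := hse.map_of_exact jstar
      have hf0 : ((ShortComplex.mk f g w).map jstar).f = 0 := hY.eq_of_src _ _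
      have hmono : Mono (jstar.map g) := hmap.exact.mono_g hf0
      have hepi : Epi (jstar.map g) := hmap.epi_g
      have hiso : IsIso (jstar.map g) := isIso_of_mono_of_epi _
      refine ⟨e.inv ≫ (adj.homEquiv Z X').symm
        (adj.homEquiv Z X e.hom ≫ inv (jstar.map g)), ?_⟩
      rw [Category.assoc, ← adj.homEquiv_naturality_right_symm, Category.assoc,
        IsIso.inv_hom_id, Category.comp_id, Equiv.symm_apply_apply, Iso.inv_hom_id]
  · intro h
    have hCz : IsZero (jstar.obj (cokernel (adj.counit.app X))) := by
      refine IsZero.of_iso ?_ (PreservesCokernel.iso jstar (adj.counit.app X))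
      exact IsZero.of_iso (isZero_zero ℬ) (cokernel.ofEpi (jstar.map (adj.counit.app X)))
    have hπ : cokernel.π (adj.counit.app X) = 0 := (h _ hCz).1 _
    have hepi : Epi (adj.counit.app X) := Abelian.epi_of_cokernel_π_eq_zero _ hπ
    have hKz : IsZero (jstar.obj (kernel (adj.counit.app X))) := by
      refine IsZero.of_iso ?_ (PreservesKernel.iso jstar (adj.counit.app X))
      exact IsZero.of_iso (isZero_zero ℬ) (kernel.ofMono (jstar.map (adj.counit.app X)))
    have hSE : (ShortComplex.mk (kernel.ι (adj.counit.app X)) (adj.counit.app X)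
        (kernel.condition _)).ShortExact :=
      { exact := ShortComplex.exact_of_f_is_kernel _ (kernelIsKernel _)
        mono_f := inferInstance
        epi_g := hepi }
    obtain ⟨s, hs⟩ := (h _ hKz).2 _ (kernel.ι (adj.counit.app X)) (adj.counit.app X)
      (kernel.condition _) hSE
    have ht : (𝟙 ((jstar ⋙ jbang).obj X) - adj.counit.app X ≫ s) ≫ adj.counit.app X = 0 := by
      simp [Preadditive.sub_comp, Category.assoc, hs]
    set p := kernel.lift (adj.counit.app X) (𝟙 ((jstar ⋙ jbang).obj X) - adj.counit.app X ≫ s)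
      ht with hp
    have hιp : kernel.ι (adj.counit.app X) ≫ p = 𝟙 (kernel (adj.counit.app X)) := by
      rw [← cancel_mono (kernel.ι (adj.counit.app X))]
      simp [hp, Preadditive.comp_sub, kernel.condition_assoc]
    have hp0 : p = 0 := by
      have h1 : adj.homEquiv (jstar.obj X) _ p =
          adj.homEquiv (jstar.obj X) _ (0 : jbang.obj (jstar.obj X) ⟶ _) :=
        hKz.eq_of_tgt _ _
      exact (adj.homEquiv _ _).injective h1
    have hK0 : IsZero (kernel (adj.counit.app X)) := by
      rw [IsZero.iff_id_eq_zero, ← hιp, hp0, comp_zero]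
    have hι0 : kernel.ι (adj.counit.app X) = 0 := hK0.eq_of_src _ _
    have hmono : Mono (adj.counit.app X) := Abelian.mono_of_kernel_ι_eq_zero _ hι0
    have : IsIso (adj.counit.app X) := isIso_of_mono_of_epi _
    exact ⟨jstar.obj X, ⟨asIso (adj.counit.app X)⟩⟩
end

section
/- In the left recollement setting, let 𝒜' ⊆ 𝒜 be a full subcategory such that Hom_𝒜(X', Y) = 0 and Hom_𝒜(Y, X') = 0 for all objects X' of 𝒜' and Y of 𝒞. Then the restriction of j* to 𝒜' is fully faithful: for all objects X, X' of 𝒜' the map Hom_𝒜(X, X') → Hom_ℬ(j*(X), j*(X')) induced by j* is bijective. -/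
open CategoryTheory Limits

/-- **Left recollement: `j*` is fully faithful on subcategories orthogonal to `𝒞`.**
Let `𝒜`, `ℬ` be abelian categories and `j* : 𝒜 ⥤ ℬ` an exact functor admitting a fully
faithful left adjoint `j_! : ℬ ⥤ 𝒜`, and let `𝒞 = Ker j*`.  Let `𝒜'` be a class of
objects of `𝒜` such that `Hom(X', Y) = 0` and `Hom(Y, X') = 0` for all `X' ∈ 𝒜'` and
`Y ∈ 𝒞`.  Then `j*` is fully faithful on `𝒜'`: for all `X, X' ∈ 𝒜'`, the map
`Hom(X, X') ⟶ Hom(j*(X), j*(X'))` is bijective. -/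
theorem left_recollement_jstar_fully_faithful_on_orthogonal
    {𝒜 : Type*} [Category 𝒜] [Abelian 𝒜]
    {ℬ : Type*} [Category ℬ] [Abelian ℬ]
    (jstar : 𝒜 ⥤ ℬ) (jbang : ℬ ⥤ 𝒜) (adj : jbang ⊣ jstar)
    [jbang.Full] [jbang.Faithful]
    [PreservesFiniteLimits jstar] [PreservesFiniteColimits jstar]
    (𝒜' : 𝒜 → Prop)
    (h₁ : ∀ (X' : 𝒜) (Y : 𝒜), 𝒜' X' → IsZero (jstar.obj Y) → ∀ f : X' ⟶ Y, f = 0)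
    (h₂ : ∀ (X' : 𝒜) (Y : 𝒜), 𝒜' X' → IsZero (jstar.obj Y) → ∀ f : Y ⟶ X', f = 0)
    (X X' : 𝒜) (hX : 𝒜' X) (hX' : 𝒜' X') :
    Function.Bijective (fun f : X ⟶ X' => jstar.map f) := by
  -- The counit at `X` and `X'`
  set ε : jbang.obj (jstar.obj X) ⟶ X := adj.counit.app X with hε
  -- `j*` of the counit is an isomorphism (triangle identity + unit is iso).
  have htri : adj.unit.app (jstar.obj X) ≫ jstar.map ε = 𝟙 _ :=
    adj.right_triangle_components X
  have hiso : IsIso (jstar.map ε) := by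
    exact ⟨adj.unit.app (jstar.obj X), by
      rw [← cancel_mono (jstar.map ε)]; simp [htri], htri⟩
  -- `ε` is an epimorphism.
  have hepi : Epi ε := by
    apply Abelian.epi_of_cokernel_π_eq_zero
    have hz : IsZero (jstar.obj (cokernel ε)) := by
      refine IsZero.of_iso ?_ (PreservesCokernel.iso jstar ε)
      haveI : Epi (jstar.map ε) := by exact inferInstance
      exact IsZero.of_iso (isZero_zero ℬ) (cokernel.ofEpi (jstar.map ε))
    have := h₁ X (cokernel ε) hX hz (cokernel.π ε)
    exact this
  constructor
  · -- Injectivity: use naturality of the counit and `ε` epi.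
    intro f₁ f₂ h
    simp only at h
    have n₁ : ε ≫ f₁ = jbang.map (jstar.map f₁) ≫ adj.counit.app X' :=
      (adj.counit.naturality f₁).symm
    have n₂ : ε ≫ f₂ = jbang.map (jstar.map f₂) ≫ adj.counit.app X' :=
      (adj.counit.naturality f₂).symm
    have : ε ≫ f₁ = ε ≫ f₂ := by rw [n₁, n₂, h]
    exact (cancel_epi ε).mp this
  · -- Surjectivity
    intro g
    set u : jbang.obj (jstar.obj X) ⟶ X' := jbang.map g ≫ adj.counit.app X' with hu
    -- `u` kills the kernel of `ε`, since that kernel lies in `𝒞`.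
    have hker : IsZero (jstar.obj (kernel ε)) := by
      refine IsZero.of_iso ?_ (PreservesKernel.iso jstar ε)
      haveI : Mono (jstar.map ε) := by exact inferInstance
      exact IsZero.of_iso (isZero_zero ℬ) (kernel.ofMono (jstar.map ε))
    have hw : kernel.ι ε ≫ u = 0 := h₂ X' (kernel ε) hX' hker _
    refine ⟨Abelian.epiDesc ε u hw, ?_⟩
    have hc : ε ≫ Abelian.epiDesc ε u hw = u := Abelian.comp_epiDesc ε u hw
    -- apply `j*` and compose with the unit
    have : jstar.map ε ≫ jstar.map (Abelian.epiDesc ε u hw) = jstar.map u := by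
      rw [← jstar.map_comp, hc]
    have key : adj.unit.app (jstar.obj X) ≫ jstar.map u = g := by
      have nat : g ≫ adj.unit.app (jstar.obj X') =
          adj.unit.app (jstar.obj X) ≫ jstar.map (jbang.map g) := adj.unit.naturality g
      rw [hu, jstar.map_comp, ← Category.assoc, ← nat, Category.assoc,
        adj.right_triangle_components X', Category.comp_id]
    simp only
    calc jstar.map (Abelian.epiDesc ε u hw)
        = adj.unit.app (jstar.obj X) ≫ jstar.map ε ≫ jstar.map (Abelian.epiDesc ε u hw) := by
          rw [← Category.assoc, htri, Category.id_comp]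
      _ = g := by rw [this, key]
end

section
/- In the left recollement setting, if L is a simple object of 𝒜 such that j*(L) is not a zero object, then j*(L) is a simple object of ℬ, and the counit ε_L : j_!(j*(L)) → L of the adjunction j_! ⊣ j* is an epimorphism. -/
open CategoryTheory Limits

/-- **Left recollement: images of simple objects.**
Let `𝒜`, `ℬ` be abelian categories and `j* : 𝒜 ⥤ ℬ` an exact functor admitting a fully
faithful left adjoint `j_! : ℬ ⥤ 𝒜`.  If `L` is a simple object of `𝒜` such that `j*(L)`
is not zero, then `j*(L)` is a simple object of `ℬ`, and the counit
`ε_L : j_!(j*(L)) ⟶ L` is an epimorphism. -/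
theorem left_recollement_simple_image_simple_and_counit_epi
    {𝒜 : Type*} [Category 𝒜] [Abelian 𝒜]
    {ℬ : Type*} [Category ℬ] [Abelian ℬ]
    (jstar : 𝒜 ⥤ ℬ) (jbang : ℬ ⥤ 𝒜) (adj : jbang ⊣ jstar)
    [jbang.Full] [jbang.Faithful]
    [PreservesFiniteLimits jstar] [PreservesFiniteColimits jstar]
    (L : 𝒜) (hL : Simple L) (hnz : ¬ IsZero (jstar.obj L)) :
    Simple (jstar.obj L) ∧ Epi (adj.counit.app L) := by
  have hRA : jstar.IsRightAdjoint := ⟨jbang, ⟨adj⟩⟩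
  -- the identity of `j*L` is nonzero
  have hid : (𝟙 (jstar.obj L) : _) ≠ 0 := fun h =>
    hnz ((IsZero.iff_id_eq_zero _).mpr h)
  -- counit is nonzero, by the triangle identity
  have hcounit_ne : adj.counit.app L ≠ 0 := by
    intro h
    apply hid
    have := adj.right_triangle_components L
    rw [h, jstar.map_zero, comp_zero] at this
    exact this.symm
  have hepi : Epi (adj.counit.app L) := by
    haveI : Simple ((𝟭 𝒜).obj L) := hL
    exact epi_of_nonzero_to_simple hcounit_ne
  refine ⟨⟨fun {Y} f hf => ?_⟩, hepi⟩
  -- key factorisation: f = unit ≫ j*(j_! f ≫ ε)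
  set g : jbang.obj Y ⟶ L := jbang.map f ≫ adj.counit.app L with hg
  have hfac : adj.unit.app Y ≫ jstar.map g = f := by
    rw [hg, jstar.map_comp, ← Category.assoc, ← Functor.comp_map jbang jstar,
      ← adj.unit.naturality f]
    simp [adj.right_triangle_components L]
  constructor
  · intro hiso h0
    exact hnz (IsZero.of_epi_eq_zero f h0)
  · intro hfne
    have hgne : g ≠ 0 := by
      intro h
      apply hfne
      rw [← hfac, h, jstar.map_zero, comp_zero]
    have : Epi g := epi_of_nonzero_to_simple hgne
    have : Epi (jstar.map g) := jstar.map_epi g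
    have : Epi f := by rw [← hfac]; exact epi_comp _ _
    exact isIso_of_mono_of_epi f
end

section
/- In the left recollement setting, if L and L' are simple objects of 𝒜 such that j*(L) and j*(L') are not zero objects and j*(L) ≅ j*(L'), then L ≅ L'. -/
open CategoryTheory Limits

/-- If `g : K ⟶ M` is a morphism in an abelian category with `M` simple, and an exact functor
`jstar` sends `g` to an isomorphism with `jstar.obj M` nonzero, then any morphism `g' : K ⟶ M'`
to a simple object `M'` with `jstar.obj M'` nonzero satisfies `kernel.ι g ≫ g' = 0`. -/
theorem left_recollement_aux
    {𝒜 : Type*} [Category 𝒜] [Abelian 𝒜]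
    {ℬ : Type*} [Category ℬ] [Abelian ℬ]
    (jstar : 𝒜 ⥤ ℬ)
    [PreservesFiniteLimits jstar] [PreservesFiniteColimits jstar]
    {K M M' : 𝒜} (hM' : Simple M')
    (hnz' : ¬ IsZero (jstar.obj M'))
    (g : K ⟶ M) (g' : K ⟶ M') (hg : IsIso (jstar.map g)) :
    kernel.ι g ≫ g' = 0 := by
  -- `jstar.obj (kernel g)` is a zero object
  have hker : IsZero (jstar.obj (kernel g)) := by
    have h0 : jstar.map (kernel.ι g) ≫ jstar.map g = 0 := by
      rw [← jstar.map_comp, kernel.condition, jstar.map_zero]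
    have hz : jstar.map (kernel.ι g) = 0 := by
      have := hg
      rw [← cancel_mono (jstar.map g), h0, zero_comp]
    have : Mono (jstar.map (kernel.ι g)) := jstar.map_mono _
    rw [IsZero.iff_id_eq_zero]
    rw [← cancel_mono (jstar.map (kernel.ι g)), hz, comp_zero, zero_comp]
  by_contra h
  have hepi : Epi (kernel.ι g ≫ g') := epi_of_nonzero_to_simple h
  have hepi' : Epi (jstar.map (kernel.ι g ≫ g')) := jstar.map_epi _
  have hz : jstar.map (kernel.ι g ≫ g') = 0 := hker.eq_zero_of_src _
  apply hnz'
  rw [IsZero.iff_id_eq_zero]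
  rw [← cancel_epi (jstar.map (kernel.ι g ≫ g')), hz, zero_comp, comp_zero]

/-- **Left recollement: `j*` separates simple objects outside `𝒞`.**
Let `𝒜`, `ℬ` be abelian categories and `j* : 𝒜 ⥤ ℬ` an exact functor admitting a fully
faithful left adjoint `j_! : ℬ ⥤ 𝒜`.  If `L` and `L'` are simple objects of `𝒜` such that
`j*(L)` and `j*(L')` are not zero and `j*(L) ≅ j*(L')`, then `L ≅ L'`. -/
theorem left_recollement_simple_iso_of_jstar_iso
    {𝒜 : Type*} [Category 𝒜] [Abelian 𝒜]
    {ℬ : Type*} [Category ℬ] [Abelian ℬ]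
    (jstar : 𝒜 ⥤ ℬ) (jbang : ℬ ⥤ 𝒜) (adj : jbang ⊣ jstar)
    [jbang.Full] [jbang.Faithful]
    [PreservesFiniteLimits jstar] [PreservesFiniteColimits jstar]
    (L L' : 𝒜) (hL : Simple L) (hL' : Simple L')
    (hnz : ¬ IsZero (jstar.obj L)) (hnz' : ¬ IsZero (jstar.obj L'))
    (e : Nonempty (jstar.obj L ≅ jstar.obj L')) :
    Nonempty (L ≅ L') := by
  obtain ⟨e⟩ := e
  -- the counit at `L` and the transpose of `e`
  set K : 𝒜 := jbang.obj (jstar.obj L) with hK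
  set ε : K ⟶ L := adj.counit.app L with hε
  set f : K ⟶ L' := (adj.homEquiv _ _).symm e.hom with hf
  -- `jstar.map ε` is an isomorphism (unit is iso since `jbang` is fully faithful)
  have hunit : IsIso (adj.unit.app (jstar.obj L)) := inferInstance
  have hιε : IsIso (jstar.map ε) := by
    haveI h : IsIso (adj.unit.app (jstar.obj L) ≫ jstar.map ε) := by
      rw [adj.right_triangle_components L]; exact IsIso.id _
    exact IsIso.of_isIso_comp_left (adj.unit.app (jstar.obj L)) (jstar.map ε)
  -- `jstar.map f` is an isomorphism
  have hfe : adj.unit.app (jstar.obj L) ≫ jstar.map f = e.hom := by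
    have := adj.homEquiv_unit (X := jstar.obj L) (Y := L') (f := f)
    rw [hf]
    have h2 : adj.homEquiv _ _ ((adj.homEquiv _ _).symm e.hom) = e.hom :=
      (adj.homEquiv _ _).apply_symm_apply e.hom
    rw [adj.homEquiv_unit] at h2
    exact h2
  have hιf : IsIso (jstar.map f) := by
    have : jstar.map f = inv (adj.unit.app (jstar.obj L)) ≫ e.hom := by
      rw [← hfe, IsIso.inv_hom_id_assoc]
    rw [this]; infer_instance
  -- `ε` and `f` are nonzero, hence epi
  have hεnz : ε ≠ 0 := by
    intro h
    apply hnz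
    rw [h, jstar.map_zero] at hιε
    rw [IsZero.iff_id_eq_zero, ← cancel_epi (0 : jstar.obj K ⟶ jstar.obj L),
      zero_comp, comp_zero]
  have hfnz : f ≠ 0 := by
    intro h
    apply hnz'
    rw [h, jstar.map_zero] at hιf
    rw [IsZero.iff_id_eq_zero, ← cancel_epi (0 : jstar.obj K ⟶ jstar.obj L'),
      zero_comp, comp_zero]
  have hεepi : Epi ε := epi_of_nonzero_to_simple hεnz
  have hfepi : Epi f := epi_of_nonzero_to_simple hfnz
  -- kernels agree
  have h1 : kernel.ι ε ≫ f = 0 := left_recollement_aux jstar hL' hnz' ε f hιε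
  have h2 : kernel.ι f ≫ ε = 0 := left_recollement_aux jstar hL hnz f ε hιf
  -- build the isomorphism
  refine ⟨⟨Abelian.epiDesc ε f h1, Abelian.epiDesc f ε h2, ?_, ?_⟩⟩
  · rw [← cancel_epi ε, ← Category.assoc, Abelian.comp_epiDesc, Abelian.comp_epiDesc,
      Category.comp_id]
  · rw [← cancel_epi f, ← Category.assoc, Abelian.comp_epiDesc, Abelian.comp_epiDesc,
      Category.comp_id]
end

section
/- Let k be a field of characteristic zero, A a commutative k-algebra, B ⊆ A a k-subalgebra, and d : A → A a k-linear derivation of A. Let v ∈ A be a nilpotent element such that the iterate dⁿ(v) lies in B for every natural number n with n ≠ 1 (in particular v = d⁰(v) ∈ B). Then the element u = d(v) is integral over B, i.e., u satisfies a monic polynomial equation with coefficients in B. -/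
/-- **Integrality from a derivation and a nilpotent element.**
Let `k` be a field of characteristic zero, `A` a commutative `k`-algebra, `B ⊆ A` a
`k`-subalgebra and `d : A → A` a `k`-linear derivation.  Let `v ∈ A` be a nilpotent
element such that `dⁿ(v) ∈ B` for every natural number `n ≠ 1` (in particular
`v = d⁰(v) ∈ B`).  Then `u = d(v)` is integral over `B`. -/
theorem derivation_nilpotent_is_integral
    {k : Type*} [Field k] [CharZero k]
    {A : Type*} [CommRing A] [Algebra k A]
    (B : Subalgebra k A) (d : Derivation k A A)
    (v : A) (hv : IsNilpotent v)
    (hd : ∀ n : ℕ, n ≠ 1 → (⇑d)^[n] v ∈ B) :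
    IsIntegral B (d v) := by
  classical
  obtain ⟨m, hm⟩ := hv
  rcases Nat.eq_zero_or_pos m with hm0 | hmpos
  · subst hm0
    rw [pow_zero] at hm
    haveI : Subsingleton A := subsingleton_of_zero_eq_one hm.symm
    have : d v = 0 := Subsingleton.elim _ _
    rw [this]
    exact isIntegral_zero
  set u := d v with hu
  set B' : Subalgebra k A := Algebra.adjoin k {x | ∃ n, 2 ≤ n ∧ x = (⇑d)^[n] v} with hB'
  have hB'B : B' ≤ B := by
    apply Algebra.adjoin_le
    rintro x ⟨n, hn2, rfl⟩
    exact hd n (by omega)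
  have hdu : d u ∈ B' := by
    refine Algebra.subset_adjoin ⟨2, le_refl 2, ?_⟩
    simp [hu, Function.iterate_succ_apply']
  have hstab : ∀ b ∈ B', d b ∈ B' := by
    intro b hb
    induction hb using Algebra.adjoin_induction with
    | mem x hx =>
      obtain ⟨n, hn, rfl⟩ := hx
      exact Algebra.subset_adjoin ⟨n + 1, by omega, (Function.iterate_succ_apply' _ _ _).symm⟩
    | algebraMap c =>
      simp only [Derivation.map_algebraMap]
      exact zero_mem B'
    | add x y hx hy ihx ihy => rw [map_add]; exact add_mem ihx ihy
    | mul x y hx hy ihx ihy =>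
      rw [Derivation.leibniz, smul_eq_mul, smul_eq_mul]
      exact add_mem (mul_mem hx ihy) (mul_mem hy ihx)
  set F : Submodule ↥B' A :=
    Submodule.span ↥B' {x | ∃ i j : ℕ, i + j + 1 ≤ m ∧ x = v ^ i * u ^ j} with hF
  have hgen : ∀ i j : ℕ, i + j + 1 ≤ m → v ^ i * u ^ j ∈ F :=
    fun i j h => Submodule.subset_span ⟨i, j, h, rfl⟩
  have hmulF : ∀ b ∈ B', ∀ x ∈ F, b * x ∈ F := by
    intro b hb x hx
    exact F.smul_mem ⟨b, hb⟩ hx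
  have hFd : ∀ x ∈ F, d x ∈ F := by
    intro x hx
    induction hx using Submodule.span_induction with
    | mem x hx =>
      obtain ⟨i, j, hij, rfl⟩ := hx
      rw [Derivation.leibniz, Derivation.leibniz_pow, Derivation.leibniz_pow]
      simp only [smul_eq_mul, nsmul_eq_mul]
      apply add_mem
      · rcases Nat.eq_zero_or_pos j with h0 | h0
        · subst h0; simp
        · have he : v ^ i * ((j : A) * (u ^ (j - 1) * d u)) =
              ((j : A) * d u) * (v ^ i * u ^ (j - 1)) := by ring
          rw [he]
          exact hmulF _ (mul_mem (natCast_mem B' j) hdu) _ (hgen i (j - 1) (by omega))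
      · rcases Nat.eq_zero_or_pos i with h0 | h0
        · subst h0; simp
        · have he : u ^ j * ((i : A) * (v ^ (i - 1) * d v)) =
              (i : A) * (v ^ (i - 1) * u ^ (j + 1)) := by
            rw [hu.symm]; rw [pow_succ]; ring
          rw [he]
          exact hmulF _ (natCast_mem B' i) _ (hgen (i - 1) (j + 1) (by omega))
    | zero => simp
    | add x y hx hy ihx ihy => rw [map_add]; exact add_mem ihx ihy
    | smul b x hx ih =>
      have hb : b • x = (b : A) * x := rfl
      rw [hb, Derivation.leibniz, smul_eq_mul, smul_eq_mul]
      refine add_mem (hmulF _ b.2 _ ih) ?_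
      rw [mul_comm]
      exact hmulF _ (hstab _ b.2) _ hx
  have claim : ∀ n, n ≤ m →
      (⇑d)^[n] (v ^ m) - (m.descFactorial n : A) * (v ^ (m - n) * u ^ n) ∈ F := by
    intro n
    induction n with
    | zero => intro _; simp
    | succ n ih =>
      intro hn1
      have hnm : n ≤ m := by omega
      have h1 := ih hnm
      have hX : (⇑d)^[n + 1] (v ^ m) = d ((⇑d)^[n] (v ^ m)) :=
        Function.iterate_succ_apply' _ _ _
      have hdT : d (v ^ (m - n) * u ^ n) =
          ((m - n : ℕ) : A) * (v ^ (m - n - 1) * u ^ (n + 1)) +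
            ((n : A) * d u) * (v ^ (m - n) * u ^ (n - 1)) := by
        rw [Derivation.leibniz, Derivation.leibniz_pow, Derivation.leibniz_pow]
        simp only [smul_eq_mul, nsmul_eq_mul]
        rw [hu.symm]; ring
      have hdc : d ((m.descFactorial n : A) * (v ^ (m - n) * u ^ n)) =
          (m.descFactorial n : A) * d (v ^ (m - n) * u ^ n) := by
        rw [← nsmul_eq_mul, ← nsmul_eq_mul]
        exact map_nsmul d _ _
      have hmem1 : d ((⇑d)^[n] (v ^ m) -
          (m.descFactorial n : A) * (v ^ (m - n) * u ^ n)) ∈ F := hFd _ h1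
      have hmem2 : ((m.descFactorial n : A) * ((n : A) * d u)) *
          (v ^ (m - n) * u ^ (n - 1)) ∈ F := by
        rcases Nat.eq_zero_or_pos n with h0 | h0
        · subst h0; simp
        · exact hmulF _ (mul_mem (natCast_mem B' _) (mul_mem (natCast_mem B' _) hdu)) _
            (hgen _ _ (by omega))
      have heq : (⇑d)^[n + 1] (v ^ m) -
          (m.descFactorial (n + 1) : A) * (v ^ (m - (n + 1)) * u ^ (n + 1)) =
          d ((⇑d)^[n] (v ^ m) - (m.descFactorial n : A) * (v ^ (m - n) * u ^ n)) +
            ((m.descFactorial n : A) * ((n : A) * d u)) * (v ^ (m - n) * u ^ (n - 1)) := by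
        rw [hX, map_sub, hdc, hdT, Nat.descFactorial_succ, Nat.cast_mul]
        have h5 : m - (n + 1) = m - n - 1 := by omega
        rw [h5]; ring
      rw [heq]
      exact F.add_mem hmem1 hmem2
  have hfin := claim m le_rfl
  rw [hm] at hfin
  have hz : (⇑d)^[m] (0 : A) = 0 := Function.iterate_fixed (map_zero d) m
  rw [hz, Nat.sub_self, pow_zero, Nat.descFactorial_self, zero_sub, neg_mem_iff] at hfin
  have hum : u ^ m ∈ F := by
    have hb : algebraMap k A ((m.factorial : k)⁻¹) ∈ B' := B'.algebraMap_mem _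
    have h6 := hmulF _ hb _ hfin
    have hne : (m.factorial : k) ≠ 0 := Nat.cast_ne_zero.mpr (Nat.factorial_ne_zero m)
    have hcalc : algebraMap k A ((m.factorial : k)⁻¹) * ((m.factorial : A) * (1 * u ^ m)) = u ^ m := by
      rw [one_mul, ← mul_assoc, ← map_natCast (algebraMap k A) m.factorial, ← map_mul,
        inv_mul_cancel₀ hne, map_one, one_mul]
    rwa [hcalc] at h6
  have hvB : v ∈ B := by simpa using hd 0 (by omega)
  have hFM : ∀ x ∈ F, x ∈ Submodule.span ↥B (Set.range fun j : Fin m => u ^ (j : ℕ)) := by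
    intro x hx
    induction hx using Submodule.span_induction with
    | mem x hx =>
      obtain ⟨i, j, hij, rfl⟩ := hx
      have hb : v ^ i * u ^ j = (⟨v ^ i, pow_mem hvB i⟩ : ↥B) • u ^ j := rfl
      rw [hb]
      exact Submodule.smul_mem _ _ (Submodule.subset_span ⟨⟨j, by omega⟩, rfl⟩)
    | zero => exact zero_mem _
    | add x y hx hy ihx ihy => exact add_mem ihx ihy
    | smul b x hx ih =>
      have hb : b • x = (⟨(b : A), hB'B b.2⟩ : ↥B) • x := rfl
      rw [hb]
      exact Submodule.smul_mem _ _ ih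
  have hspan := hFM _ hum
  rw [Submodule.mem_span_range_iff_exists_fun] at hspan
  obtain ⟨c, hc⟩ := hspan
  refine ⟨Polynomial.X ^ m - ∑ j : Fin m, Polynomial.C (c j) * Polynomial.X ^ (j : ℕ), ?_, ?_⟩
  · apply Polynomial.monic_X_pow_sub
    apply lt_of_le_of_lt (Polynomial.degree_sum_le _ _)
    rw [Finset.sup_lt_iff (by exact_mod_cast WithBot.bot_lt_coe m)]
    intro j _
    exact lt_of_le_of_lt (Polynomial.degree_C_mul_X_pow_le _ _)
      (by exact_mod_cast j.2)
  · have : Polynomial.eval₂ (algebraMap ↥B A) u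
        (Polynomial.X ^ m - ∑ j : Fin m, Polynomial.C (c j) * Polynomial.X ^ (j : ℕ)) =
        u ^ m - ∑ j : Fin m, algebraMap ↥B A (c j) * u ^ (j : ℕ) := by
      simp [Polynomial.eval₂_sub, Polynomial.eval₂_finset_sum]
    rw [this, sub_eq_zero, ← hc]
    exact Finset.sum_congr rfl fun j _ => rfl
end

section
/- Let E be a finite-dimensional vector space over ℚ, let α₁, …, α_r ∈ E be linearly independent vectors, and let C = { Σ_{i=1}^r c_i α_i : c_i ∈ ℚ, c_i ≥ 0 } be the rational cone they generate. Let P ⊆ E be a finitely generated additive subgroup. Then for all λ, μ ∈ E the set P ∩ (λ + C) ∩ (μ − C) is finite. (In particular, the partial order on a weight lattice defined by λ ≤ μ iff μ − λ lies in the nonnegative rational cone generated by the simple roots is locally finite.) -/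
/-- Rationals of the form `z / D - L` in a bounded interval form a finite set. -/
lemma finite_shifted_div {D : ℚ} (hD : 0 < D) (L a b : ℚ) :
    {q : ℚ | (∃ z : ℤ, q + L = (z : ℚ) / D) ∧ a ≤ q ∧ q ≤ b}.Finite := by
  apply Set.Finite.subset
    ((Set.finite_Icc ⌈(a + L) * D⌉ ⌊(b + L) * D⌋).image (fun z : ℤ => (z : ℚ) / D - L))
  rintro q ⟨⟨z, hz⟩, ha, hb⟩
  refine ⟨z, ⟨?_, ?_⟩, by linarith⟩
  · rw [Int.ceil_le]
    have : a + L ≤ (z : ℚ) / D := by linarith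
    calc (a + L) * D ≤ ((z : ℚ) / D) * D := by nlinarith
      _ = z := by field_simp
  · rw [Int.le_floor]
    have : (z : ℚ) / D ≤ b + L := by linarith
    calc (z : ℚ) = ((z : ℚ) / D) * D := by field_simp
      _ ≤ (b + L) * D := by nlinarith

/-- A linear functional takes values with a common denominator on a f.g. subgroup. -/
lemma exists_common_denom {E : Type*} [AddCommGroup E] [Module ℚ E]
    (P : AddSubgroup E) (hP : P.FG) (f : E →ₗ[ℚ] ℚ) :
    ∃ D : ℚ, 0 < D ∧ ∀ x ∈ P, ∃ z : ℤ, f x = (z : ℚ) / D := by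
  obtain ⟨S, hS⟩ := hP
  set D : ℕ := ∏ s ∈ S, (f s).den with hDdef
  have hDpos : 0 < D := Finset.prod_pos fun s _ => (f s).pos
  refine ⟨(D : ℚ), by exact_mod_cast hDpos, ?_⟩
  set A : AddSubgroup E :=
    { carrier := {x | ∃ z : ℤ, f x = (z : ℚ) / D}
      zero_mem' := ⟨0, by simp⟩
      add_mem' := by
        rintro x y ⟨z₁, hz₁⟩ ⟨z₂, hz₂⟩
        exact ⟨z₁ + z₂, by push_cast [map_add, hz₁, hz₂]; ring⟩
      neg_mem' := by
        rintro x ⟨z, hz⟩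
        exact ⟨-z, by push_cast [map_neg, hz]; ring⟩ } with hA
  have hSA : (S : Set E) ⊆ A := by
    intro s hs
    have hdvd : ((f s).den : ℤ) ∣ (D : ℤ) := by
      exact_mod_cast Finset.dvd_prod_of_mem (fun s => (f s).den) hs
    obtain ⟨k, hk⟩ := hdvd
    have hden : ((f s).den : ℚ) ≠ 0 := by exact_mod_cast (f s).den_nz
    have hkpos : (0 : ℚ) < (k : ℚ) := by
      have h1 : (0 : ℤ) < ((f s).den : ℤ) * k := by rw [← hk]; exact_mod_cast hDpos
      have h2 : (0 : ℤ) < ((f s).den : ℤ) := by exact_mod_cast (f s).pos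
      have h3 : (0 : ℤ) < k := by nlinarith
      exact_mod_cast h3
    show ∃ z : ℤ, f s = (z : ℚ) / (D : ℚ)
    refine ⟨(f s).num * k, ?_⟩
    have hDq : (D : ℚ) = ((f s).den : ℚ) * (k : ℚ) := by exact_mod_cast hk
    rw [hDq]
    push_cast
    rw [mul_div_mul_right _ _ (ne_of_gt hkpos)]
    exact (Rat.num_div_den (f s)).symm
  intro x hx
  have : P ≤ A := hS ▸ (AddSubgroup.closure_le A).2 hSA
  exact this hx

/-- **Local finiteness of the cone order.**
Let `E` be a finite-dimensional vector space over `ℚ`, let `α₁, …, α_r ∈ E` be linearly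
independent, and let `C = {Σ cᵢ αᵢ : cᵢ ∈ ℚ, cᵢ ≥ 0}` be the rational cone they generate.
Let `P ⊆ E` be a finitely generated additive subgroup.  Then for all `λ, μ ∈ E` the set
`P ∩ (λ + C) ∩ (μ − C)` is finite. -/
theorem finite_inter_cone_translates
    {E : Type*} [AddCommGroup E] [Module ℚ E] [FiniteDimensional ℚ E]
    {r : ℕ} (α : Fin r → E) (hα : LinearIndependent ℚ α)
    (P : AddSubgroup E) (hP : P.FG) (lam mu : E) :
    Set.Finite {x : E | x ∈ P ∧
      (∃ c : Fin r → ℚ, (∀ i, 0 ≤ c i) ∧ x - lam = ∑ i, c i • α i) ∧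
      (∃ c : Fin r → ℚ, (∀ i, 0 ≤ c i) ∧ mu - x = ∑ i, c i • α i)} := by
  set S := {x : E | x ∈ P ∧
      (∃ c : Fin r → ℚ, (∀ i, 0 ≤ c i) ∧ x - lam = ∑ i, c i • α i) ∧
      (∃ c : Fin r → ℚ, (∀ i, 0 ≤ c i) ∧ mu - x = ∑ i, c i • α i)} with hSdef
  rcases Set.eq_empty_or_nonempty S with h | ⟨x₀, hx₀P, ⟨c₀, hc₀, he₀⟩, ⟨d₀, hd₀, he₀'⟩⟩
  · rw [h]; exact Set.finite_empty
  -- dual functionals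
  have hcoe : LinearIndepOn ℚ id (Set.range α) := (linearIndepOn_id_range_iff hα.injective).mpr hα
  set bas := Module.Basis.extend hcoe with hbas
  have hmem : ∀ i, α i ∈ hcoe.extend (Set.subset_univ _) :=
    fun i => hcoe.subset_extend _ ⟨i, rfl⟩
  set f : Fin r → (E →ₗ[ℚ] ℚ) := fun i => bas.coord ⟨α i, hmem i⟩ with hf
  have hfα : ∀ i j, f i (α j) = if j = i then 1 else 0 := by
    classical
    intro i j
    have h2 : bas ⟨α j, hmem j⟩ = α j := Module.Basis.extend_apply_self hcoe ⟨α j, hmem j⟩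
    rw [hf]
    rw [Module.Basis.coord_apply, ← h2, Module.Basis.repr_self, Finsupp.single_apply]
    by_cases h : j = i
    · subst h; simp
    · have hne : (⟨α j, hmem j⟩ : hcoe.extend (Set.subset_univ _)) ≠ ⟨α i, hmem i⟩ := by
        simp only [ne_eq, Subtype.mk.injEq]
        exact fun hh => h (hα.injective hh)
      simp [h, hne]
  have hfsum : ∀ (i : Fin r) (c : Fin r → ℚ), f i (∑ j, c j • α j) = c i := by
    intro i c
    rw [map_sum]
    rw [Finset.sum_eq_single i]
    · simp [hfα]
    · intro j _ hj; simp [hfα, hj]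
    · intro h; exact absurd (Finset.mem_univ i) h
  -- common denominators
  have hD : ∀ i : Fin r, ∃ D : ℚ, 0 < D ∧ ∀ x ∈ P, ∃ z : ℤ, f i x = (z : ℚ) / D :=
    fun i => exists_common_denom P hP (f i)
  choose D hDpos hDval using hD
  set b : Fin r → ℚ := fun i => c₀ i + d₀ i with hb
  set T : Fin r → Set ℚ := fun i =>
    {q : ℚ | (∃ z : ℤ, q + f i lam = (z : ℚ) / D i) ∧ 0 ≤ q ∧ q ≤ b i} with hT
  have hTfin : ∀ i, (T i).Finite := fun i => finite_shifted_div (hDpos i) _ _ _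
  apply Set.Finite.subset (((Set.Finite.pi fun i => hTfin i).image
    (fun c : Fin r → ℚ => lam + ∑ i, c i • α i)))
  rintro x ⟨hxP, ⟨c, hc, he⟩, ⟨d, hd, he'⟩⟩
  refine ⟨c, ?_, show lam + ∑ i, c i • α i = x by rw [← he]; abel⟩
  intro i _
  -- c i + d i = b i
  have hsum : ∑ j, (c j + d j - b j) • α j = 0 := by
    have h1 : ∑ j, (c j + d j) • α j = mu - lam := by
      simp only [add_smul, Finset.sum_add_distrib, ← he, ← he']; abel
    have h2 : ∑ j, b j • α j = mu - lam := by
      simp only [hb, add_smul, Finset.sum_add_distrib, ← he₀, ← he₀']; abel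
    simp only [sub_smul, Finset.sum_sub_distrib, h1, h2, sub_self]
  have hcb : c i + d i = b i := by
    have := Fintype.linearIndependent_iff.1 hα _ hsum i
    linarith
  refine ⟨?_, hc i, by linarith [hd i]⟩
  -- denominator condition
  have hfx : f i x = f i lam + c i := by
    have : f i (x - lam) = c i := by rw [he, hfsum]
    rw [map_sub] at this; linarith
  obtain ⟨z, hz⟩ := hDval i x hxP
  exact ⟨z, by rw [← hz, hfx]; ring⟩
end

section
/- Let Λ be a lower finite poset and let 𝒜 be an abelian category equipped with a left stratification by Λ. Then for every simple object L of 𝒜 there exists a unique λ ∈ Λ such that L lies in 𝒜_{≤λ} and L does not lie in 𝒜_{<λ}, where 𝒜_{≤λ} := 𝒜_{Λ_{≤λ}} and 𝒜_{<λ} := 𝒜_{Λ_{<λ}}. -/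
open CategoryTheory Limits

universe w v u v' u'

/-- A Serre subcategory of an abelian category, given as a property of objects: it contains
the zero objects and is closed under subobjects, quotient objects, and extensions. -/
structure IsSerreSubcategory {𝒜 : Type*} [Category 𝒜] [Abelian 𝒜] (P : 𝒜 → Prop) : Prop where
  prop_of_isZero : ∀ X : 𝒜, IsZero X → P X
  prop_of_mono : ∀ {X Y : 𝒜} (f : X ⟶ Y), Mono f → P Y → P X
  prop_of_epi : ∀ {X Y : 𝒜} (f : X ⟶ Y), Epi f → P X → P Y
  prop_of_extension : ∀ (S : ShortComplex 𝒜), S.ShortExact → P S.X₁ → P S.X₃ → P S.X₂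

/-- A left stratification of an abelian category `𝒜` by a poset `Λ`.  It consists of a Serre
subcategory `𝒜_Ω` of `𝒜` (given by the property `P Ω` of objects) for every finite lower
subset `Ω ⊆ Λ` and an abelian strata category `strata l` for every `l ∈ Λ`, such that the
collection is order preserving and exhaustive, `𝒜_∅ = 0`, and for every finite lower subset
`Ω` and every maximal element `l` of `Ω` there is an exact functor `j* : 𝒜_Ω ⥤ 𝒜_l`
admitting a fully faithful left adjoint `j_!`, whose kernel is exactly `𝒜_{Ω∖{l}}`; these
left recollements are compatible: `j_!` takes values in `𝒜_{≤l}` and the restriction of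
`j*` to `𝒜_{≤l}` is naturally isomorphic to the structure functor of `Λ_{≤l}`. -/
structure LeftStratification (Λ : Type w) [PartialOrder Λ]
    (𝒜 : Type u) [Category.{v} 𝒜] [Abelian 𝒜] where
  /-- membership of an object in the subcategory `𝒜_Ω` -/
  P : Set Λ → 𝒜 → Prop
  /-- the strata categories `𝒜_l` -/
  strata : Λ → Cat.{v', u'}
  strataAbelian : ∀ l : Λ, Abelian (strata l)
  mono : ∀ {Ω Ω' : Set Λ}, Ω ⊆ Ω' → ∀ {X : 𝒜}, P Ω X → P Ω' X
  serre : ∀ Ω : Set Λ, Ω.Finite → IsLowerSet Ω → IsSerreSubcategory (P Ω)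
  empty_isZero : ∀ X : 𝒜, P ∅ X → IsZero X
  exhaustive : ∀ X : 𝒜, ∃ Ω : Set Λ, Ω.Finite ∧ IsLowerSet Ω ∧ P Ω X
  /-- the functors `j* : 𝒜_Ω ⥤ 𝒜_l` (only relevant for `Ω` finite lower and `l ∈ Ω`
  maximal) -/
  jstar : ∀ (Ω : Set Λ) (l : Λ), ObjectProperty.FullSubcategory (P Ω) ⥤ strata l
  /-- the functors `j_! : 𝒜_l ⥤ 𝒜_Ω` (only relevant for `Ω` finite lower and `l ∈ Ω`
  maximal) -/
  jbang : ∀ (Ω : Set Λ) (l : Λ), strata l ⥤ ObjectProperty.FullSubcategory (P Ω)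
  adj : ∀ (Ω : Set Λ), Ω.Finite → IsLowerSet Ω → ∀ l ∈ Ω, (∀ m ∈ Ω, l ≤ m → m = l) →
    Nonempty (jbang Ω l ⊣ jstar Ω l)
  jbang_full : ∀ (Ω : Set Λ), Ω.Finite → IsLowerSet Ω → ∀ l ∈ Ω, (∀ m ∈ Ω, l ≤ m → m = l) →
    (jbang Ω l).Full
  jbang_faithful : ∀ (Ω : Set Λ), Ω.Finite → IsLowerSet Ω → ∀ l ∈ Ω,
    (∀ m ∈ Ω, l ≤ m → m = l) → (jbang Ω l).Faithful
  jstar_exact : ∀ (Ω : Set Λ), Ω.Finite → IsLowerSet Ω → ∀ l ∈ Ω, (∀ m ∈ Ω, l ≤ m → m = l) →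
    Nonempty (PreservesFiniteLimits (jstar Ω l)) ∧
      Nonempty (PreservesFiniteColimits (jstar Ω l))
  jstar_kernel : ∀ (Ω : Set Λ), Ω.Finite → IsLowerSet Ω → ∀ l ∈ Ω, (∀ m ∈ Ω, l ≤ m → m = l) →
    ∀ X : ObjectProperty.FullSubcategory (P Ω), (IsZero ((jstar Ω l).obj X) ↔ P (Ω \ {l}) X.obj)
  jbang_mem : ∀ (Ω : Set Λ), Ω.Finite → IsLowerSet Ω → ∀ l ∈ Ω, (∀ m ∈ Ω, l ≤ m → m = l) →
    ∀ Z : strata l, P {m : Λ | m ≤ l} ((jbang Ω l).obj Z).obj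
  compat : ∀ (Ω : Set Λ) (hfin : Ω.Finite) (hlow : IsLowerSet Ω) (l : Λ) (hl : l ∈ Ω)
      (hmax : ∀ m ∈ Ω, l ≤ m → m = l),
    Nonempty ((ObjectProperty.ιOfLE (fun X hX => mono (fun m hm => hlow hm hl) hX) ⋙
      jstar Ω l) ≅ jstar {m : Λ | m ≤ l} l)

/-!
For existence, take a finite lower set `Ω` of minimal size with `L ∈ 𝒜_Ω` and a maximal
`l ∈ Ω`. Minimality forces `j* L ≠ 0`, so the counit `j_! j* L → L` is a nonzero map to a
simple object, hence an epimorphism, and `L ∈ 𝒜_{≤l}` because `j_!` lands there; moreover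
`L ∉ 𝒜_{<l} ⊆ 𝒜_{Ω∖{l}}`.

For uniqueness, suppose `L ∈ 𝒜_{≤l₁}`, `L ∈ 𝒜_{≤l₂} ∖ 𝒜_{<l₂}` and `l₂ ≰ l₁`. Then `l₂` is
maximal in `Ω = Λ_{≤l₁} ∪ Λ_{≤l₂}` and `L ∈ 𝒜_{≤l₁} ⊆ 𝒜_{Ω∖{l₂}}`. Compatibility of the
recollements identifies `𝒜_{Ω∖{l₂}} ∩ 𝒜_{≤l₂}` with `𝒜_{<l₂}`, a contradiction.
-/

namespace CategoryTheory.Adjunction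

lemma counit_app_ne_zero {C D : Type*} [Category C] [Category D] [HasZeroMorphisms C]
    [HasZeroMorphisms D] {F : C ⥤ D} {G : D ⥤ C} (adj : F ⊣ G) {X : D}
    (hX : ¬IsZero (G.obj X)) : adj.counit.app X ≠ 0 := by
  intro h
  apply hX
  rw [IsZero.iff_id_eq_zero]
  apply (adj.homEquiv _ _).symm.injective
  simp [homEquiv_counit, h]

end CategoryTheory.Adjunction

namespace LeftStratification

open Set

variable {Λ : Type w} [PartialOrder Λ] {𝒜 : Type u} [Category.{v} 𝒜] [Abelian 𝒜]
  (S : LeftStratification.{w, v, u, v', u'} Λ 𝒜) {Ω : Set Λ} {l : Λ}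

lemma P_diff_singleton_iff_P_Iio (hfin : Ω.Finite) (hlow : IsLowerSet Ω) (hl : l ∈ Ω)
    (hmax : ∀ m ∈ Ω, l ≤ m → m = l) {X : 𝒜} (hX : S.P (Iic l) X) :
    S.P (Ω \ {l}) X ↔ S.P (Iio l) X := by
  let _ := S.strataAbelian l
  obtain ⟨e⟩ := S.compat Ω hfin hlow l hl hmax
  have hΩ := S.jstar_kernel Ω hfin hlow l hl hmax ⟨X, S.mono (hlow.Iic_subset hl) hX⟩
  have hIic := S.jstar_kernel (Iic l) (hfin.subset (hlow.Iic_subset hl)) (isLowerSet_Iic l) l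
    le_rfl (fun _ hm hlm => le_antisymm hm hlm) ⟨X, hX⟩
  rw [Iic_sdiff_right] at hIic
  exact hΩ.symm.trans ((e.app ⟨X, hX⟩).isZero_iff.trans hIic)

lemma P_Iic_of_simple_of_not_P_diff_singleton (hfin : Ω.Finite) (hlow : IsLowerSet Ω)
    (hl : l ∈ Ω) (hmax : ∀ m ∈ Ω, l ≤ m → m = l) {X : 𝒜} [Simple X] (hX : S.P Ω X)
    (hX' : ¬S.P (Ω \ {l}) X) : S.P (Iic l) X := by
  let _ := S.strataAbelian l
  obtain ⟨adj⟩ := S.adj Ω hfin hlow l hl hmax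
  have hj : ¬IsZero ((S.jstar Ω l).obj ⟨X, hX⟩) :=
    fun h => hX' ((S.jstar_kernel Ω hfin hlow l hl hmax _).mp h)
  have hε : ((adj.counit.app ⟨X, hX⟩).hom : _ ⟶ X) ≠ 0 :=
    fun h => adj.counit_app_ne_zero hj (ObjectProperty.hom_ext _ h)
  exact (S.serre _ (hfin.subset (hlow.Iic_subset hl)) (isLowerSet_Iic l)).prop_of_epi _
    (epi_of_nonzero_to_simple hε)
    (S.jbang_mem Ω hfin hlow l hl hmax _)

lemma exists_P_Iic_not_P_Iio_of_simple (X : 𝒜) [Simple X] :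
    ∃ l, S.P (Iic l) X ∧ ¬S.P (Iio l) X := by
  obtain ⟨Ω, ⟨hfin, hlow, hX⟩, hmin⟩ := (measure ncard).wf.has_min
    {Ω | Ω.Finite ∧ IsLowerSet Ω ∧ S.P Ω X} (S.exhaustive X)
  have hne : Ω.Nonempty :=
    nonempty_iff_ne_empty.2 fun h => Simple.not_isZero X (S.empty_isZero X (h ▸ hX))
  obtain ⟨l, hl⟩ := hfin.exists_maximal hne
  have hmax : ∀ m ∈ Ω, l ≤ m → m = l := fun m hm hlm => (hl.eq_of_le hm hlm).symm
  have hX' : ¬S.P (Ω \ {l}) X := fun h =>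
    hmin _ ⟨hfin.sdiff, hlow.erase hmax, h⟩ (ncard_sdiff_singleton_lt_of_mem hl.prop hfin)
  refine ⟨l, S.P_Iic_of_simple_of_not_P_diff_singleton hfin hlow hl.prop hmax hX hX',
    fun h => hX' (S.mono ?_ h)⟩
  rw [← Iic_sdiff_right]
  exact sdiff_subset_sdiff_left (hlow.Iic_subset hl.prop)

lemma le_of_P_Iic_of_not_P_Iio {l₁ l₂ : Λ} (hfin₁ : (Iic l₁).Finite) (hfin₂ : (Iic l₂).Finite)
    {X : 𝒜} (h₁ : S.P (Iic l₁) X) (h₂ : S.P (Iic l₂) X) (h₂' : ¬S.P (Iio l₂) X) : l₂ ≤ l₁ := by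
  by_contra hle
  have hmax : ∀ m ∈ Iic l₁ ∪ Iic l₂, l₂ ≤ m → m = l₂ := by
    rintro m (hm | hm) hlm
    · exact absurd (hlm.trans hm) hle
    · exact le_antisymm hm hlm
  refine h₂' ((S.P_diff_singleton_iff_P_Iio (hfin₁.union hfin₂)
    ((isLowerSet_Iic l₁).union (isLowerSet_Iic l₂)) (Or.inr le_rfl) hmax h₂).1 (S.mono ?_ h₁))
  exact fun m hm => ⟨Or.inl hm, fun h => hle (h ▸ hm)⟩

end LeftStratification

/-- **Simple objects in a left stratified category have a unique stratum.**
Let `Λ` be a lower finite poset and `𝒜` an abelian category equipped with a left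
stratification by `Λ`.  Then for every simple object `L` of `𝒜` there is a unique
`l ∈ Λ` such that `L` lies in `𝒜_{≤l}` but not in `𝒜_{<l}`. -/
theorem LeftStratification.exists_unique_stratum_of_simple
    {Λ : Type w} [PartialOrder Λ] (hΛ : ∀ l : Λ, Set.Finite {m : Λ | m ≤ l})
    {𝒜 : Type u} [Category.{v} 𝒜] [Abelian 𝒜]
    (S : LeftStratification.{w, v, u, v', u'} Λ 𝒜)
    (L : 𝒜) (hL : Simple L) :
    ∃! l : Λ, S.P {m : Λ | m ≤ l} L ∧ ¬ S.P {m : Λ | m < l} L := by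
  obtain ⟨l, hl⟩ := S.exists_P_Iic_not_P_Iio_of_simple L
  refine ⟨l, hl, fun l' hl' => le_antisymm ?_ ?_⟩
  · exact S.le_of_P_Iic_of_not_P_Iio (hΛ l) (hΛ l') hl.1 hl'.1 hl'.2
  · exact S.le_of_P_Iic_of_not_P_Iio (hΛ l') (hΛ l) hl'.1 hl.1 hl.2
end
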